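/- Let Φ be a unital positive linear map, and A, B strictly positive operators with mA ≤ B ≤ MA for 0 < m < M, and p ∈ [-1,0). Then Φ(T_p(A|B)) ≥ T_p(Φ(A)|Φ(B)) + (C(m,M,p)/p)·Φ(A), where T_p(A|B) = (A ♯_p B - A)/p and C(m,M,p) is the difference-type Kantorovich constant. -/

import Mathlib

/-!
For `p < 0` the function `t ↦ t^p` is convex on `(0, ∞)`, so on `[m, M]` it lies below its chord
`ℓ(t) = α t + β`, and `ℓ(t) - t^p` is at most `C(m, M, p)`, its value at the point where the
tangent is parallel to the chord. Since `mA ≤ B ≤ MA`, the spectrum of `A^{-1/2} B A^{-1/2}`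
lies in `[m, M]`, so the functional calculus followed by conjugation with `A^{1/2}` turns
`t^p ≤ ℓ(t) ≤ t^p + C` into `A ♯_p B ≤ αB + βA` and, for `ΦA, ΦB` (which satisfy the same
bounds), `αΦB + βΦA ≤ ΦA ♯_p ΦB + C ΦA`. As `Φ` is positive, linear and unital,
`Φ(A ♯_p B) ≤ ΦA ♯_p ΦB + C ΦA`; dividing by `p < 0` reverses the inequality.
-/

/-- The weighted geometric-type mean `A ♯_p B = A^(1/2) (A^(-1/2) B A^(-1/2))^p A^(1/2)`. -/
noncomputable def sharpPow {H : Type*} [NormedAddCommGroup H] [InnerProductSpace ℂ H]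
    [CompleteSpace H] (p : ℝ) (A B : H →L[ℂ] H) : H →L[ℂ] H :=
  cfc (fun t : ℝ => t ^ (1 / 2 : ℝ)) A *
    cfc (fun t : ℝ => t ^ p) (cfc (fun t : ℝ => t ^ (-(1 / 2) : ℝ)) A * B *
      cfc (fun t : ℝ => t ^ (-(1 / 2) : ℝ)) A) *
    cfc (fun t : ℝ => t ^ (1 / 2 : ℝ)) A

/-- The Tsallis relative operator entropy `T_p(A|B) = (A ♯_p B - A) / p`. -/
noncomputable def tsallis {H : Type*} [NormedAddCommGroup H] [InnerProductSpace ℂ H]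
    [CompleteSpace H] (p : ℝ) (A B : H →L[ℂ] H) : H →L[ℂ] H :=
  p⁻¹ • (sharpPow p A B - A)

open Set

section Scalar

open Real

-- Bernoulli's inequality for the exponent `1 - p ≥ 1`, evaluated at `r⁻¹`.
lemma one_add_mul_sub_one_le_rpow_of_nonpos {p r : ℝ} (hp : p ≤ 0) (hr : 0 < r) :
    1 + p * (r - 1) ≤ r ^ p := by
  have h := one_add_mul_self_le_rpow_one_add (s := r⁻¹ - 1) (by linarith [inv_pos.2 hr])
    (p := 1 - p) (by linarith)
  rw [add_sub_cancel, inv_rpow hr.le, ← rpow_neg hr.le, neg_sub, rpow_sub_one hr.ne'] at h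
  have := mul_le_mul_of_nonneg_right h hr.le
  rw [div_mul_cancel₀ _ hr.ne'] at this
  have e : (1 + (1 - p) * (r⁻¹ - 1)) * r = 1 + p * (r - 1) := by field_simp; ring
  linarith

lemma rpow_tangent_le_of_nonpos {p x t : ℝ} (hp : p ≤ 0) (hx : 0 < x) (ht : 0 < t) :
    x ^ p + p * x ^ (p - 1) * (t - x) ≤ t ^ p := by
  have h := mul_le_mul_of_nonneg_left (one_add_mul_sub_one_le_rpow_of_nonpos hp (div_pos ht hx))
    (rpow_nonneg hx.le p)
  rw [div_rpow ht.le hx.le, mul_div_cancel₀ _ (rpow_pos_of_pos hx p).ne'] at h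
  calc x ^ p + p * x ^ (p - 1) * (t - x) = x ^ p * (1 + p * (t / x - 1)) := by
        rw [rpow_sub_one hx.ne']; field_simp
    _ ≤ t ^ p := h

lemma rpow_le_chord_of_nonpos {p m M t : ℝ} (hp : p ≤ 0) (hm : 0 < m) (hmM : m < M)
    (ht : t ∈ Icc m M) :
    t ^ p ≤ (M ^ p - m ^ p) / (M - m) * t + (M * m ^ p - m * M ^ p) / (M - m) := by
  have ht0 : 0 < t := hm.trans_le ht.1
  have hm' := rpow_tangent_le_of_nonpos hp ht0 hm
  have hM' := rpow_tangent_le_of_nonpos hp ht0 (hm.trans hmM)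
  rw [div_mul_eq_mul_div, ← add_div, le_div_iff₀ (sub_pos.2 hmM)]
  nlinarith [mul_le_mul_of_nonneg_left hm' (sub_nonneg.2 ht.2),
    mul_le_mul_of_nonneg_left hM' (sub_nonneg.2 ht.1)]

/-- The difference-type Kantorovich constant `C(m, M, p)`. The point tested in the `if` is the
`ξ` with `p ξ^(p-1) = (M^p - m^p) / (M - m)`, where the tangent of `t^p` is parallel to its
chord over `[m, M]`; there `chord - t^p` attains its maximum. -/
noncomputable def kantorovichDiff (m M p : ℝ) : ℝ :=
  if ((M ^ p - m ^ p) / (p * (M - m))) ^ (1 / (p - 1)) ∈ Set.Icc m M then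
    (M * m ^ p - m * M ^ p) / (M - m) +
      (p - 1) * ((M ^ p - m ^ p) / (p * (M - m))) ^ (p / (p - 1))
  else 0

lemma rpow_sub_one_le_chord_slope_div {p m M : ℝ} (hp : p < 0) (hm : 0 < m) (hmM : m < M) :
    M ^ (p - 1) ≤ (M ^ p - m ^ p) / (p * (M - m)) ∧
      (M ^ p - m ^ p) / (p * (M - m)) ≤ m ^ (p - 1) := by
  have hpMm : p * (M - m) < 0 := mul_neg_of_neg_of_pos hp (sub_pos.2 hmM)
  have hm' := rpow_tangent_le_of_nonpos hp.le (hm.trans hmM) hm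
  have hM' := rpow_tangent_le_of_nonpos hp.le hm (hm.trans hmM)
  rw [le_div_iff_of_neg hpMm, div_le_iff_of_neg hpMm]
  constructor <;> nlinarith

lemma chord_slope_div_rpow_mem_Icc {p m M : ℝ} (hp : p < 0) (hm : 0 < m) (hmM : m < M) :
    ((M ^ p - m ^ p) / (p * (M - m))) ^ (1 / (p - 1)) ∈ Icc m M := by
  obtain ⟨hlo, hhi⟩ := rpow_sub_one_le_chord_slope_div hp hm hmM
  have hq : 1 / (p - 1) < 0 := by rw [one_div_neg]; linarith
  have hM := rpow_le_rpow_of_nonpos (rpow_pos_of_pos (hm.trans hmM) _) hlo hq.le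
  have hm' := rpow_le_rpow_of_nonpos ((rpow_pos_of_pos (hm.trans hmM) _).trans_le hlo) hhi hq.le
  rw [← rpow_mul hm.le, mul_one_div_cancel (by linarith), rpow_one] at hm'
  rw [← rpow_mul (hm.trans hmM).le, mul_one_div_cancel (by linarith), rpow_one] at hM
  exact ⟨hm', hM⟩

lemma chord_le_rpow_add_kantorovichDiff {p m M t : ℝ} (hp : p < 0) (hm : 0 < m) (hmM : m < M)
    (ht : 0 < t) :
    (M ^ p - m ^ p) / (M - m) * t + (M * m ^ p - m * M ^ p) / (M - m) ≤
      t ^ p + kantorovichDiff m M p := by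
  set y := (M ^ p - m ^ p) / (p * (M - m)) with hy
  have hy0 : 0 < y := (rpow_pos_of_pos (hm.trans hmM) _).trans_le
    (rpow_sub_one_le_chord_slope_div hp hm hmM).1
  set ξ := y ^ (1 / (p - 1)) with hξ
  have hξ0 : 0 < ξ := rpow_pos_of_pos hy0 _
  have hp1 : p - 1 ≠ 0 := by linarith
  have hξy : ξ ^ (p - 1) = y := by
    rw [hξ, ← rpow_mul hy0.le, one_div_mul_cancel hp1, rpow_one]
  have hξp : y ^ (p / (p - 1)) = ξ ^ p := by
    rw [hξ, ← rpow_mul hy0.le, one_div_mul_eq_div]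
  have hslope : (M ^ p - m ^ p) / (M - m) = p * y := by
    rw [hy, mul_div_assoc', mul_div_mul_left _ _ hp.ne]
  have htan := rpow_tangent_le_of_nonpos hp.le hξ0 ht
  have hξp' : ξ ^ p = ξ ^ (p - 1) * ξ := by rw [rpow_sub_one hξ0.ne']; field_simp
  rw [kantorovichDiff, if_pos (chord_slope_div_rpow_mem_Icc hp hm hmM), ← hy, hξp, hslope]
  rw [hξy] at htan hξp'
  nlinarith

end Scalar

section Perspective

open CFC

variable {A : Type*} [CStarAlgebra A] [PartialOrder A] [StarOrderedRing A]

noncomputable def perspective (f : ℝ → ℝ) (a b : A) : A :=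
  a ^ (1 / 2 : ℝ) * cfc f (a ^ (-(1 / 2) : ℝ) * b * a ^ (-(1 / 2) : ℝ)) * a ^ (1 / 2 : ℝ)

variable {a b : A} {m M : ℝ}

lemma IsSelfAdjoint.of_smul_le {c : ℝ} (ha : 0 ≤ a) (h : c • a ≤ b) : IsSelfAdjoint b := by
  simpa using (IsSelfAdjoint.of_nonneg (sub_nonneg.2 h)).add
    ((IsSelfAdjoint.all c).smul (.of_nonneg ha))

lemma IsSelfAdjoint.rpow_neg_one_half_conjugate (hb : IsSelfAdjoint b) (a : A) :
    IsSelfAdjoint (a ^ (-(1 / 2) : ℝ) * b * a ^ (-(1 / 2) : ℝ)) :=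
  hb.conjugate_self (.of_nonneg rpow_nonneg)

lemma rpow_one_half_mul_rpow_one_half (ha : 0 ≤ a) : a ^ (1 / 2 : ℝ) * a ^ (1 / 2 : ℝ) = a := by
  rw [← sqrt_eq_rpow, sqrt_mul_sqrt_self a]

lemma rpow_one_half_conjugate_rpow_neg_one_half (ha : IsStrictlyPositive a) (b : A) :
    a ^ (1 / 2 : ℝ) * (a ^ (-(1 / 2) : ℝ) * b * a ^ (-(1 / 2) : ℝ)) * a ^ (1 / 2 : ℝ) = b := by
  simp only [← mul_assoc, rpow_mul_rpow_neg (1 / 2 : ℝ) ha, one_mul]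
  rw [mul_assoc, rpow_neg_mul_rpow (1 / 2 : ℝ) ha, mul_one]

lemma spectrum_rpow_neg_one_half_conjugate_subset_Icc (ha : IsStrictlyPositive a)
    (hmb : m • a ≤ b) (hbM : b ≤ M • a) :
    spectrum ℝ (a ^ (-(1 / 2) : ℝ) * b * a ^ (-(1 / 2) : ℝ)) ⊆ Icc m M := by
  have hc : IsSelfAdjoint (a ^ (-(1 / 2) : ℝ)) := .of_nonneg rpow_nonneg
  have hx := (IsSelfAdjoint.of_smul_le ha.nonneg hmb).rpow_neg_one_half_conjugate a
  have hlo := hc.conjugate_le_conjugate hmb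
  have hhi := hc.conjugate_le_conjugate hbM
  rw [mul_smul_comm, smul_mul_assoc, conjugate_rpow_neg_one_half a,
    ← Algebra.algebraMap_eq_smul_one, algebraMap_le_iff_le_spectrum hx] at hlo
  rw [mul_smul_comm, smul_mul_assoc, conjugate_rpow_neg_one_half a,
    ← Algebra.algebraMap_eq_smul_one, le_algebraMap_iff_spectrum_le hx] at hhi
  exact fun t ht => ⟨hlo t ht, hhi t ht⟩

lemma perspective_le_perspective (ha : IsStrictlyPositive a) (hmb : m • a ≤ b) (hbM : b ≤ M • a)
    {f g : ℝ → ℝ} (hf : ContinuousOn f (Icc m M)) (hg : ContinuousOn g (Icc m M))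
    (hfg : ∀ t ∈ Icc m M, f t ≤ g t) :
    perspective f a b ≤ perspective g a b := by
  have hspec := spectrum_rpow_neg_one_half_conjugate_subset_Icc ha hmb hbM
  exact (IsSelfAdjoint.of_nonneg rpow_nonneg).conjugate_le_conjugate <|
    cfc_mono (fun t ht => hfg t (hspec ht)) (hf.mono hspec) (hg.mono hspec)

lemma perspective_affine (ha : IsStrictlyPositive a) (hmb : m • a ≤ b) (c d : ℝ) :
    perspective (fun t => c * t + d) a b = c • b + d • a := by
  have hx := (IsSelfAdjoint.of_smul_le ha.nonneg hmb).rpow_neg_one_half_conjugate a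
  rw [perspective, cfc_add_const d _ _ (by fun_prop) hx, cfc_const_mul_id c _ hx,
    Algebra.algebraMap_eq_smul_one, mul_add, add_mul, mul_smul_comm, smul_mul_assoc,
    mul_smul_comm, smul_mul_assoc, rpow_one_half_conjugate_rpow_neg_one_half ha, mul_one,
    rpow_one_half_mul_rpow_one_half ha.nonneg]

lemma perspective_add_const (ha : IsStrictlyPositive a) (hmb : m • a ≤ b) (hbM : b ≤ M • a)
    {f : ℝ → ℝ} (hf : ContinuousOn f (Icc m M)) (d : ℝ) :
    perspective (fun t => f t + d) a b = perspective f a b + d • a := by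
  have hx := (IsSelfAdjoint.of_smul_le ha.nonneg hmb).rpow_neg_one_half_conjugate a
  rw [perspective, perspective, cfc_add_const d f _
    (hf.mono (spectrum_rpow_neg_one_half_conjugate_subset_Icc ha hmb hbM)) hx,
    Algebra.algebraMap_eq_smul_one, mul_add, add_mul, mul_smul_comm, smul_mul_assoc, mul_one,
    rpow_one_half_mul_rpow_one_half ha.nonneg]

end Perspective

section PositiveMap

variable {A B : Type*} [CStarAlgebra A] [PartialOrder A] [StarOrderedRing A]
  [CStarAlgebra B] [PartialOrder B] [StarOrderedRing B]
  {Φ : A →ₗ[ℂ] B}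

lemma LinearMap.monotone_of_map_nonneg (hΦ : ∀ a, 0 ≤ a → 0 ≤ Φ a) : Monotone Φ :=
  fun a b hab => by simpa using hΦ (b - a) (sub_nonneg.2 hab)

lemma LinearMap.isStrictlyPositive_map_of_map_nonneg (hΦ : ∀ a, 0 ≤ a → 0 ≤ Φ a)
    (hΦ1 : Φ 1 = 1) {a : A} (ha : IsStrictlyPositive a) : IsStrictlyPositive (Φ a) := by
  nontriviality B
  have : Nontrivial A := ⟨⟨1, 0, fun h => by simp [h] at hΦ1⟩⟩
  obtain ⟨r, hr, hra⟩ := (CFC.exists_pos_algebraMap_le_iff ha.isSelfAdjoint).2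
    fun x hx => ha.spectrum_pos hx
  refine (isStrictlyPositive_algebraMap hr).of_le ?_
  calc algebraMap ℝ B r = Φ (algebraMap ℝ A r) := by
        rw [Algebra.algebraMap_eq_smul_one, Algebra.algebraMap_eq_smul_one,
          LinearMap.map_smul_of_tower, hΦ1]
    _ ≤ Φ a := LinearMap.monotone_of_map_nonneg hΦ hra

theorem LinearMap.map_perspective_rpow_le_of_map_nonneg (hΦ : ∀ a, 0 ≤ a → 0 ≤ Φ a)
    (hΦ1 : Φ 1 = 1) {a b : A} {m M p : ℝ} (ha : IsStrictlyPositive a) (hmb : m • a ≤ b)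
    (hbM : b ≤ M • a) (hm : 0 < m) (hmM : m < M) (hp : p < 0) :
    Φ (perspective (· ^ p) a b) ≤
      perspective (· ^ p) (Φ a) (Φ b) + kantorovichDiff m M p • Φ a := by
  set α := (M ^ p - m ^ p) / (M - m)
  set β := (M * m ^ p - m * M ^ p) / (M - m)
  have hΦmono := LinearMap.monotone_of_map_nonneg hΦ
  have hΦa := LinearMap.isStrictlyPositive_map_of_map_nonneg hΦ hΦ1 ha
  have hΦmb : m • Φ a ≤ Φ b := by simpa using hΦmono hmb
  have hΦbM : Φ b ≤ M • Φ a := by simpa using hΦmono hbM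
  have hcont : ContinuousOn (· ^ p) (Icc m M) := fun t ht =>
    (Real.continuousAt_rpow_const t p (.inl (hm.trans_le ht.1).ne')).continuousWithinAt
  calc Φ (perspective (· ^ p) a b)
      ≤ Φ (perspective (fun t => α * t + β) a b) :=
        hΦmono <| perspective_le_perspective ha hmb hbM hcont (by fun_prop)
          fun t ht => rpow_le_chord_of_nonpos hp.le hm hmM ht
    _ = perspective (fun t => α * t + β) (Φ a) (Φ b) := by
        rw [perspective_affine ha hmb, perspective_affine hΦa hΦmb, map_add,
          LinearMap.map_smul_of_tower, LinearMap.map_smul_of_tower]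
    _ ≤ perspective (fun t => t ^ p + kantorovichDiff m M p) (Φ a) (Φ b) :=
        perspective_le_perspective hΦa hΦmb hΦbM (by fun_prop) (hcont.add continuousOn_const)
          fun t ht => chord_le_rpow_add_kantorovichDiff hp hm hmM (hm.trans_le ht.1)
    _ = _ := perspective_add_const hΦa hΦmb hΦbM hcont _

end PositiveMap

lemma sharpPow_eq_perspective {H : Type*} [NormedAddCommGroup H] [InnerProductSpace ℂ H]
    [CompleteSpace H] (p : ℝ) {A : H →L[ℂ] H} (hA : 0 ≤ A) (B : H →L[ℂ] H) :
    sharpPow p A B = perspective (· ^ p) A B := by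
  rw [sharpPow, perspective, CFC.rpow_eq_cfc_real hA, CFC.rpow_eq_cfc_real hA]

theorem stmt_18 {H K : Type*}
    [NormedAddCommGroup H] [InnerProductSpace ℂ H] [CompleteSpace H]
    [NormedAddCommGroup K] [InnerProductSpace ℂ K] [CompleteSpace K]
    (Φ : (H →L[ℂ] H) →ₗ[ℂ] (K →L[ℂ] K))
    (hΦpos : ∀ T : H →L[ℂ] H, 0 ≤ T → 0 ≤ Φ T) (hΦunital : Φ 1 = 1)
    (A B : H →L[ℂ] H) (hA0 : 0 ≤ A) (hAu : IsUnit A)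
    (m M : ℝ) (hm : 0 < m) (hmM : m < M)
    (hmA : m • A ≤ B) (hBM : B ≤ M • A)
    (p : ℝ) (hp0 : p < 0) (C : ℝ)
    (hC : C =
      if ((M ^ p - m ^ p) / (p * (M - m))) ^ (1 / (p - 1)) ∈ Set.Icc m M then
        (M * m ^ p - m * M ^ p) / (M - m) +
          (p - 1) * ((M ^ p - m ^ p) / (p * (M - m))) ^ (p / (p - 1))
      else 0) :
    tsallis p (Φ A) (Φ B) + (C / p) • Φ A ≤ Φ (tsallis p A B) := by
  have hC' : kantorovichDiff m M p = C := hC.symm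
  have key := LinearMap.map_perspective_rpow_le_of_map_nonneg hΦpos hΦunital
    (hAu.isStrictlyPositive hA0) hmA hBM hm hmM hp0
  rw [← sharpPow_eq_perspective p hA0, ← sharpPow_eq_perspective p (hΦpos A hA0), hC'] at key
  rw [tsallis, tsallis, LinearMap.map_smul_of_tower, map_sub]
  calc p⁻¹ • (sharpPow p (Φ A) (Φ B) - Φ A) + (C / p) • Φ A
      = p⁻¹ • (sharpPow p (Φ A) (Φ B) + C • Φ A) - p⁻¹ • Φ A := by module
    _ ≤ p⁻¹ • Φ (sharpPow p A B) - p⁻¹ • Φ A :=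
        sub_le_sub_right (smul_le_smul_of_nonpos_left key (inv_nonpos.2 hp0.le)) _
    _ = p⁻¹ • (Φ (sharpPow p A B) - Φ A) := (smul_sub _ _ _).symm
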